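/- Let X ~ USh(ω,η) with ω > 0, η > 0. Then E[X²] = (ω/(ω+3η))·[ω/(2+ω) + η/(1+ω) + 2ωη/(1+ω)^2]. -/

import Mathlib

/-! Multiplied by `x ^ 2`, the density is a combination of `x ^ (ω + 1)`, `x ^ (2ω + 1)` and
`log x * x ^ (2ω + 1)`. On `[0, 1]` the powers integrate to `1 / (r + 1)`, and
`log x * x ^ r` has the antiderivative `x ^ (r + 1) * ((r + 1) log x - 1) / (r + 1) ^ 2`, whose
value at `0⁺` vanishes because `x ^ (r + 1) log x → 0`; hence `∫₀¹ log x * x ^ r = -1 / (r + 1) ^ 2`. -/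

open Real MeasureTheory intervalIntegral Set Filter Topology

section LogMulRpow

variable {r : ℝ}

lemma integral_rpow_zero_one (hr : -1 < r) : ∫ x in (0:ℝ)..1, x ^ r = 1 / (r + 1) := by
  rw [integral_rpow (Or.inl hr), one_rpow, zero_rpow (by linarith), sub_zero]

lemma intervalIntegrable_log_mul_rpow (hr : -1 < r) :
    IntervalIntegrable (fun x => log x * x ^ r) volume 0 1 := by
  obtain ⟨t, ht, hrt⟩ : ∃ t, 0 < t ∧ -1 < r - t := ⟨(r + 1) / 2, by linarith, by linarith⟩
  have hdom : IntervalIntegrable (fun x : ℝ => 1 / t * x ^ (r - t)) volume 0 1 :=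
    (intervalIntegrable_rpow' hrt).const_mul _
  refine hdom.mono_fun (by fun_prop) ?_
  filter_upwards [ae_restrict_mem measurableSet_Ioc] with x hx
  rw [uIoc_of_le zero_le_one] at hx
  have hpow : 0 ≤ x ^ (r - t) := rpow_nonneg hx.1.le _
  have hsplit : x ^ r = x ^ t * x ^ (r - t) := by rw [← rpow_add hx.1, add_sub_cancel]
  rw [norm_eq_abs, norm_eq_abs, abs_of_nonneg (mul_nonneg (one_div_nonneg.2 ht.le) hpow),
    hsplit, ← mul_assoc, abs_mul, abs_of_nonneg hpow]
  exact mul_le_mul_of_nonneg_right (abs_log_mul_self_rpow_lt x t hx.1 hx.2 ht).le hpow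

lemma hasDerivAt_rpow_add_one_mul_log {x : ℝ} (hx : 0 < x) (hr : r + 1 ≠ 0) :
    HasDerivAt (fun y => y ^ (r + 1) * ((r + 1) * log y - 1) / (r + 1) ^ 2)
      (log x * x ^ r) x := by
  have hpow : HasDerivAt (fun y : ℝ => y ^ (r + 1)) ((r + 1) * x ^ r) x := by
    simpa using hasDerivAt_rpow_const (p := r + 1) (Or.inl hx.ne')
  have hlog : HasDerivAt (fun y => (r + 1) * log y - 1) ((r + 1) * x⁻¹) x :=
    ((hasDerivAt_log hx.ne').const_mul (r + 1)).sub_const 1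
  refine ((hpow.mul hlog).div_const ((r + 1) ^ 2)).congr_deriv ?_
  rw [rpow_add_one hx.ne']
  field_simp
  ring

lemma integral_log_mul_rpow (hr : -1 < r) :
    ∫ x in (0:ℝ)..1, log x * x ^ r = -1 / (r + 1) ^ 2 := by
  have hr₁ : 0 < r + 1 := by linarith
  have hpow : Tendsto (fun x : ℝ => x ^ (r + 1)) (𝓝[>] 0) (𝓝 0) := by
    simpa [zero_rpow hr₁.ne'] using
      (continuousAt_rpow_const 0 (r + 1) (Or.inr hr₁.le)).tendsto.mono_left nhdsWithin_le_nhds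
  have hzero : Tendsto (fun x => x ^ (r + 1) * ((r + 1) * log x - 1) / (r + 1) ^ 2)
      (𝓝[>] 0) (𝓝 0) := by
    have := (((tendsto_log_mul_rpow_nhdsGT_zero hr₁).const_mul (r + 1)).sub hpow).div_const
      ((r + 1) ^ 2)
    simp only [mul_zero, sub_zero, zero_div] at this
    exact this.congr fun x => by ring
  have hone : Tendsto (fun x => x ^ (r + 1) * ((r + 1) * log x - 1) / (r + 1) ^ 2)
      (𝓝[<] 1) (𝓝 (-1 / (r + 1) ^ 2)) := by
    have hcont : ContinuousAt (fun x => x ^ (r + 1) * ((r + 1) * log x - 1) / (r + 1) ^ 2) 1 :=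
      ((continuousAt_rpow_const 1 (r + 1) (Or.inl one_ne_zero)).mul
        (((continuousAt_log one_ne_zero).const_mul _).sub continuousAt_const)).div_const _
    simpa using hcont.tendsto.mono_left nhdsWithin_le_nhds
  simpa using integral_eq_sub_of_hasDerivAt_of_tendsto zero_lt_one
    (fun x hx => hasDerivAt_rpow_add_one_mul_log hx.1 hr₁.ne')
    (intervalIntegrable_log_mul_rpow hr) hzero hone

end LogMulRpow

lemma sq_mul_rpow_sub_one {x a : ℝ} (hx : 0 ≤ x) (ha : a + 1 ≠ 0) :
    x ^ 2 * x ^ (a - 1) = x ^ (a + 1) := by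
  rw [← rpow_two, ← rpow_add' hx (by convert ha using 1; ring)]
  ring_nf

theorem ush_second_moment_general (ω η : ℝ) (hω : 0 < ω) :
    ∫ x in (0:ℝ)..1, x ^ 2 *
      (ω / (ω + 3*η) * (ω * x ^ (ω-1) + (2*η - 8*ω*η*Real.log x) * x ^ (2*ω-1)))
    = ω / (ω + 3*η) * (ω / (2 + ω) + η / (1 + ω) + 2*ω*η / (1 + ω) ^ 2) := by
  set c := ω / (ω + 3*η)
  have hω₁ : -1 < ω + 1 := by linarith
  have h2ω₁ : -1 < 2*ω + 1 := by linarith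
  have hexpand : ∀ x ∈ uIcc (0:ℝ) 1,
      x ^ 2 * (c * (ω * x ^ (ω-1) + (2*η - 8*ω*η*log x) * x ^ (2*ω-1)))
        = c * (ω * x ^ (ω+1) + 2*η * x ^ (2*ω+1) - 8*ω*η * (log x * x ^ (2*ω+1))) := by
    intro x hx
    rw [uIcc_of_le zero_le_one] at hx
    rw [← sq_mul_rpow_sub_one hx.1 (by linarith : ω + 1 ≠ 0),
      ← sq_mul_rpow_sub_one hx.1 (by linarith : 2*ω + 1 ≠ 0)]
    ring
  have i₁ := (intervalIntegrable_rpow' (a := 0) (b := 1) hω₁).const_mul ω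
  have i₂ := (intervalIntegrable_rpow' (a := 0) (b := 1) h2ω₁).const_mul (2*η)
  have i₃ := (intervalIntegrable_log_mul_rpow h2ω₁).const_mul (8*ω*η)
  rw [integral_congr hexpand, intervalIntegral.integral_const_mul, integral_sub (i₁.add i₂) i₃,
    integral_add i₁ i₂]
  simp only [intervalIntegral.integral_const_mul]
  rw [integral_rpow_zero_one hω₁, integral_rpow_zero_one h2ω₁, integral_log_mul_rpow h2ω₁]
  have h₁ : 1 + ω ≠ 0 := by linarith
  have h₂ : 2 + ω ≠ 0 := by linarith
  field_simp
  ring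

theorem ush_second_moment (ω η : ℝ) (hω : 0 < ω) (hη : 0 < η) :
    ∫ x in (0:ℝ)..1, x ^ 2 *
      (ω / (ω + 3*η) * (ω * x ^ (ω-1) + (2*η - 8*ω*η*Real.log x) * x ^ (2*ω-1)))
    = ω / (ω + 3*η) * (ω / (2 + ω) + η / (1 + ω) + 2*ω*η / (1 + ω) ^ 2) :=
  ush_second_moment_general ω η hω
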